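/- arXiv:2007.15954 — 11 statements merged into one kernel-verified Lean document; each statement's English description precedes it below -/
import Mathlib

section
/- If I is a weakly δ-semiprimary ideal of R and x ∈ R is a dual-zero element of I (i.e., there exists y ∈ R with xy = 0 and neither x ∈ δ(I) nor y ∈ δ(I)), then xI = {0}. -/
variable {R : Type*}

/-- δ is an expansion function of ideals: L ⊆ δ(L) always, and J ⊆ I implies δ(J) ⊆ δ(I). -/
def IsExpansionFunction [CommRing R] (δ : Ideal R → Ideal R) : Prop :=
  (∀ L : Ideal R, L ≤ δ L) ∧ ∀ I J : Ideal R, J ≤ I → δ J ≤ δ I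

/-- I is a weakly δ-semiprimary ideal: I is proper and 0 ≠ ab ∈ I implies a ∈ δ(I) or b ∈ δ(I). -/
def IsWeaklyDeltaSemiprimary [CommRing R] (δ : Ideal R → Ideal R) (I : Ideal R) : Prop :=
  I ≠ ⊤ ∧ ∀ a b : R, a * b ≠ 0 → a * b ∈ I → a ∈ δ I ∨ b ∈ δ I

/-- I is a δ-semiprimary ideal: I is proper and ab ∈ I implies a ∈ δ(I) or b ∈ δ(I). -/
def IsDeltaSemiprimary [CommRing R] (δ : Ideal R → Ideal R) (I : Ideal R) : Prop :=
  I ≠ ⊤ ∧ ∀ a b : R, a * b ∈ I → a ∈ δ I ∨ b ∈ δ I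

/-- I is weakly semiprimary: I is proper and 0 ≠ ab ∈ I implies a ∈ √I or b ∈ √I. -/
def IsWeaklySemiprimary [CommRing R] (I : Ideal R) : Prop :=
  I ≠ ⊤ ∧ ∀ a b : R, a * b ≠ 0 → a * b ∈ I → a ∈ I.radical ∨ b ∈ I.radical

/-- I is semiprimary: I is proper and ab ∈ I implies a ∈ √I or b ∈ √I. -/
def IsSemiprimary [CommRing R] (I : Ideal R) : Prop :=
  I ≠ ⊤ ∧ ∀ a b : R, a * b ∈ I → a ∈ I.radical ∨ b ∈ I.radical

/-- P is weakly prime: P is proper and 0 ≠ ab ∈ P implies a ∈ P or b ∈ P. -/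
def IsWeaklyPrimeIdeal [CommRing R] (P : Ideal R) : Prop :=
  P ≠ ⊤ ∧ ∀ a b : R, a * b ≠ 0 → a * b ∈ P → a ∈ P ∨ b ∈ P

theorem stmt_0 [CommRing R] [Nontrivial R] (δ : Ideal R → Ideal R)
    (hδ : IsExpansionFunction δ) (I : Ideal R) (hI : IsWeaklyDeltaSemiprimary δ I)
    (x y : R) (hxy : x * y = 0) (hx : x ∉ δ I) (hy : y ∉ δ I) :
    ∀ i ∈ I, x * i = 0 := by
  intro i hi
  by_contra hne
  have hmem : x * (y + i) ∈ I := by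
    have : x * (y + i) = x * i := by rw [mul_add, hxy, zero_add]
    rw [this]; exact I.mul_mem_left x hi
  have hne' : x * (y + i) ≠ 0 := by
    have : x * (y + i) = x * i := by rw [mul_add, hxy, zero_add]
    rw [this]; exact hne
  rcases hI.2 x (y + i) hne' hmem with h | h
  · exact hx h
  · exact hy (by have := hδ.1 I hi; simpa using (δ I).sub_mem h this)
end

section
/- If I is a weakly δ-semiprimary ideal of R that is not δ-semiprimary, then I² = {0}, and hence I is contained in the nilradical of R. -/
variable {R : Type*}

theorem stmt_1 [CommRing R] [Nontrivial R] (δ : Ideal R → Ideal R)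
    (hδ : IsExpansionFunction δ) (I : Ideal R) (hI : IsWeaklyDeltaSemiprimary δ I)
    (hns : ¬ IsDeltaSemiprimary δ I) :
    I * I = ⊥ ∧ I ≤ nilradical R := by
  obtain ⟨hIt, hw⟩ := hI
  simp only [IsDeltaSemiprimary, not_and, not_forall, not_or] at hns
  obtain ⟨a, b, hab, ha, hb⟩ := hns hIt
  have hab0 : a * b = 0 := by
    by_contra h
    rcases hw a b h hab with h' | h' <;> [exact ha h'; exact hb h']
  -- aI = 0
  have haI : ∀ i ∈ I, a * i = 0 := by
    intro i hi
    by_contra h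
    have h1 : a * (b + i) ≠ 0 := by rw [mul_add, hab0, zero_add]; exact h
    have h2 : a * (b + i) ∈ I := by
      rw [mul_add, hab0, zero_add]; exact I.mul_mem_left a hi
    rcases hw a (b + i) h1 h2 with h' | h'
    · exact ha h'
    · exact hb (by simpa using (δ I).sub_mem h' (hδ.1 I hi))
  have hbI : ∀ i ∈ I, i * b = 0 := by
    intro i hi
    by_contra h
    have h1 : (a + i) * b ≠ 0 := by rw [add_mul, hab0, zero_add]; exact h
    have h2 : (a + i) * b ∈ I := by
      rw [add_mul, hab0, zero_add]; exact I.mul_mem_right b hi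
    rcases hw (a + i) b h1 h2 with h' | h'
    · exact ha (by simpa using (δ I).sub_mem h' (hδ.1 I hi))
    · exact hb h'
  have key : I * I = ⊥ := by
    rw [eq_bot_iff]
    refine Ideal.mul_le.mpr fun i hi j hj => ?_
    by_contra h
    have hij : i * j ≠ 0 := h
    have h1 : (a + i) * (b + j) = i * j := by
      rw [add_mul, mul_add, mul_add, hab0, haI j hj, hbI i hi]; ring
    rcases hw (a + i) (b + j) (by rw [h1]; exact hij)
        (by rw [h1]; exact I.mul_mem_left i hj) with h' | h'
    · exact ha (by simpa using (δ I).sub_mem h' (hδ.1 I hi))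
    · exact hb (by simpa using (δ I).sub_mem h' (hδ.1 I hj))
  refine ⟨key, fun x hx => ⟨2, ?_⟩⟩
  have : x * x ∈ I * I := Ideal.mul_mem_mul hx hx
  rw [key] at this
  simpa [pow_two] using this
end

section
/- If I is a weakly semiprimary ideal of R that is not semiprimary, then I² = {0} and I is contained in the nilradical of R. -/
variable {R : Type*}

theorem stmt_2 [CommRing R] [Nontrivial R] (I : Ideal R) (hI : IsWeaklySemiprimary I)
    (hns : ¬ IsSemiprimary I) :
    I * I = ⊥ ∧ I ≤ nilradical R := by
  obtain ⟨hItop, hw⟩ := hI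
  rw [IsSemiprimary] at hns
  push_neg at hns
  obtain ⟨a, b, habI, ha, hb⟩ := hns hItop
  have hab0 : a * b = 0 := by
    by_contra h
    rcases hw a b h habI with h1 | h2
    · exact ha h1
    · exact hb h2
  have haI : ∀ i ∈ I, a * i = 0 := by
    intro i hi
    by_contra h
    have hmem : a * (b + i) ∈ I := by
      rw [mul_add, hab0, zero_add]; exact I.mul_mem_left a hi
    have hne : a * (b + i) ≠ 0 := by
      rw [mul_add, hab0, zero_add]; exact h
    rcases hw a (b + i) hne hmem with h1 | h2
    · exact ha h1
    · refine hb ?_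
      have : b + i - i ∈ I.radical :=
        Submodule.sub_mem _ h2 (Ideal.le_radical hi)
      simpa using this
  have hbI : ∀ i ∈ I, b * i = 0 := by
    intro i hi
    by_contra h
    have hmem : (a + i) * b ∈ I := by
      rw [add_mul, hab0, zero_add]; exact I.mul_mem_right b hi
    have hne : (a + i) * b ≠ 0 := by
      rw [add_mul, hab0, zero_add, mul_comm]; exact h
    rcases hw (a + i) b hne hmem with h1 | h2
    · refine ha ?_
      have : a + i - i ∈ I.radical :=
        Submodule.sub_mem _ h1 (Ideal.le_radical hi)
      simpa using this
    · exact hb h2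
  have hII : ∀ i ∈ I, ∀ j ∈ I, i * j = 0 := by
    intro i hi j hj
    by_contra h
    have key : (a + i) * (b + j) = i * j := by
      have h1 := haI j hj
      have h2 := hbI i hi
      linear_combination hab0 + h1 + h2
    have hmem : (a + i) * (b + j) ∈ I := by
      rw [key]; exact I.mul_mem_right j hi
    have hne : (a + i) * (b + j) ≠ 0 := by rw [key]; exact h
    rcases hw (a + i) (b + j) hne hmem with h1 | h2
    · refine ha ?_
      have : a + i - i ∈ I.radical :=
        Submodule.sub_mem _ h1 (Ideal.le_radical hi)
      simpa using this
    · refine hb ?_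
      have : b + j - j ∈ I.radical :=
        Submodule.sub_mem _ h2 (Ideal.le_radical hj)
      simpa using this
  have hsq : I * I = ⊥ := by
    rw [eq_bot_iff]
    refine Ideal.mul_le.mpr fun r hr s hs => ?_
    simp [hII r hr s hs]
  refine ⟨hsq, fun x hx => ?_⟩
  rw [mem_nilradical]
  exact ⟨2, by rw [pow_two]; exact hII x hx x hx⟩
end

section
/- If I is a weakly semiprimary ideal of R with I contained in the nilradical of R, and J is any ideal with J ⊆ I, then J is a weakly semiprimary ideal of R. In particular, LI, L ∩ I, and Iⁿ (n ≥ 1) are weakly semiprimary for any ideal L. -/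
variable {R : Type*}

theorem Ideal.radical_eq_nilradical_of_le_nilradical [CommSemiring R] {K : Ideal R}
    (hK : K ≤ nilradical R) : K.radical = nilradical R :=
  le_antisymm (Ideal.radical_le_radical_iff.mpr hK) (Ideal.radical_mono bot_le)

theorem IsWeaklySemiprimary.of_le_of_le_nilradical [CommRing R] {I J : Ideal R}
    (hI : IsWeaklySemiprimary I) (hnil : I ≤ nilradical R) (hJI : J ≤ I) :
    IsWeaklySemiprimary J := by
  refine ⟨ne_top_of_le_ne_top hI.1 hJI, fun a b hab habJ => ?_⟩
  rw [Ideal.radical_eq_nilradical_of_le_nilradical (hJI.trans hnil),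
    ← Ideal.radical_eq_nilradical_of_le_nilradical hnil]
  exact hI.2 a b hab (hJI habJ)

theorem stmt_10_general [CommRing R] (I : Ideal R) (hI : IsWeaklySemiprimary I)
    (hnil : I ≤ nilradical R) :
    (∀ J : Ideal R, J ≤ I → IsWeaklySemiprimary J) ∧
    (∀ L : Ideal R, IsWeaklySemiprimary (L * I) ∧ IsWeaklySemiprimary (L ⊓ I)) ∧
    (∀ n : ℕ, 1 ≤ n → IsWeaklySemiprimary (I ^ n)) := by
  have of_le (J : Ideal R) (hJI : J ≤ I) : IsWeaklySemiprimary J :=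
    hI.of_le_of_le_nilradical hnil hJI
  exact ⟨of_le, fun L => ⟨of_le _ Ideal.mul_le_right, of_le _ inf_le_right⟩,
    fun n hn => of_le _ (Ideal.pow_le_self (by omega))⟩

theorem stmt_10 [CommRing R] [Nontrivial R] (I : Ideal R) (hI : IsWeaklySemiprimary I)
    (hnil : I ≤ nilradical R) :
    (∀ J : Ideal R, J ≤ I → IsWeaklySemiprimary J) ∧
    (∀ L : Ideal R, IsWeaklySemiprimary (L * I) ∧ IsWeaklySemiprimary (L ⊓ I)) ∧
    (∀ n : ℕ, 1 ≤ n → IsWeaklySemiprimary (I ^ n)) :=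
  stmt_10_general I hI hnil
end

section
/- If {I_i}_{i∈J} is a nonempty collection of weakly semiprimary ideals of R, each of which is not semiprimary, then the intersection ∩ I_i is a weakly semiprimary ideal of R. -/
variable {R : Type*}

lemma radical_le_nil [CommRing R] {J : Ideal R} (hw : IsWeaklySemiprimary J)
    (hn : ¬ IsSemiprimary J) : J.radical ≤ (⊥ : Ideal R).radical := by
  obtain ⟨hJ, hwk⟩ := hw
  simp only [IsSemiprimary, not_and, not_forall] at hn
  obtain ⟨a, b, hab, hcon⟩ := hn hJ
  push_neg at hcon
  obtain ⟨ha, hb⟩ := hcon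
  have hab0 : a * b = 0 := by
    by_contra h0
    rcases hwk a b h0 hab with h | h
    · exact ha h
    · exact hb h
  have key : J ≤ (⊥ : Ideal R).radical := by
    intro x hx
    have hax : a * x = 0 := by
      by_contra h0
      have hmem : a * (b + x) ∈ J := by
        have : a * (b + x) = a * x := by rw [mul_add, hab0, zero_add]
        rw [this]; exact J.mul_mem_left a hx
      have hne : a * (b + x) ≠ 0 := by
        intro he
        apply h0
        have : a * (b + x) = a * x := by rw [mul_add, hab0, zero_add]
        rwa [this] at he
      rcases hwk a (b + x) hne hmem with h | h
      · exact ha h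
      · exact hb (by have := J.radical.sub_mem h (Ideal.le_radical hx); simpa using this)
    have hxb : x * b = 0 := by
      by_contra h0
      have heq : (a + x) * b = x * b := by rw [add_mul, hab0, zero_add]
      have hmem : (a + x) * b ∈ J := by rw [heq]; exact J.mul_mem_right b hx
      have hne : (a + x) * b ≠ 0 := by rw [heq]; exact h0
      rcases hwk (a + x) b hne hmem with h | h
      · exact ha (by have := J.radical.sub_mem h (Ideal.le_radical hx); simpa using this)
      · exact hb h
    have hx2 : x * x = 0 := by
      by_contra h0
      have heq : (a + x) * (b + x) = x * x := by
        rw [add_mul, mul_add, mul_add, hab0, hax, hxb]; ring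
      have hmem : (a + x) * (b + x) ∈ J := by
        rw [heq]; exact J.mul_mem_left x hx
      rcases hwk (a + x) (b + x) (by rw [heq]; exact h0) hmem with h | h
      · exact ha (by have := J.radical.sub_mem h (Ideal.le_radical hx); simpa using this)
      · exact hb (by have := J.radical.sub_mem h (Ideal.le_radical hx); simpa using this)
    exact ⟨2, by simpa [pow_two] using hx2⟩
  calc J.radical ≤ ((⊥ : Ideal R).radical).radical := Ideal.radical_mono key
    _ = (⊥ : Ideal R).radical := Ideal.radical_idem _

theorem stmt_11 [CommRing R] [Nontrivial R] {ι : Type*} [Nonempty ι] (I : ι → Ideal R)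
    (h : ∀ i, IsWeaklySemiprimary (I i) ∧ ¬ IsSemiprimary (I i)) :
    IsWeaklySemiprimary (⨅ i, I i) := by
  obtain ⟨i0⟩ := ‹Nonempty ι›
  constructor
  · intro htop
    exact (h i0).1.1 (top_le_iff.mp (htop ▸ iInf_le I i0))
  · intro a b hne hmem
    have hi0 : a * b ∈ I i0 := (Ideal.mem_iInf.mp hmem) i0
    have hnil : (⊥ : Ideal R).radical ≤ (⨅ i, I i).radical :=
      Ideal.radical_mono bot_le
    rcases (h i0).1.2 a b hne hi0 with hr | hr
    · exact Or.inl (hnil (radical_le_nil (h i0).1 (h i0).2 hr))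
    · exact Or.inr (hnil (radical_le_nil (h i0).1 (h i0).2 hr))
end

section
/- Let δ be an expansion function of ideals of R such that δ({0}) is a δ-semiprimary ideal of R and δ(δ({0})) = δ({0}). Then every weakly δ-semiprimary ideal of R is δ-semiprimary. -/
variable {R : Type*}

theorem stmt_13 [CommRing R] [Nontrivial R] (δ : Ideal R → Ideal R)
    (hδ : IsExpansionFunction δ) (h1 : IsDeltaSemiprimary δ (δ (⊥ : Ideal R)))
    (h2 : δ (δ (⊥ : Ideal R)) = δ (⊥ : Ideal R))
    (I : Ideal R) (hI : IsWeaklyDeltaSemiprimary δ I) :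
    IsDeltaSemiprimary δ I := by
  refine ⟨hI.1, fun a b hab => ?_⟩
  by_cases h0 : a * b = 0
  · have hmem : a * b ∈ δ (⊥ : Ideal R) := (hδ.1 ⊥) (by simp [h0])
    have hle : δ (⊥ : Ideal R) ≤ δ I := hδ.2 I ⊥ bot_le
    rcases h1.2 a b hmem with h | h
    · exact Or.inl (hle (h2 ▸ h))
    · exact Or.inr (hle (h2 ▸ h))
  · exact hI.2 a b h0 hab
end

section
/- Let S be a multiplicatively closed subset of R with S ∩ Z(R) = ∅ (S contains no zerodivisors). If I is a weakly semiprimary ideal of R with S ∩ √I = ∅, then the localization I_S is a weakly semiprimary ideal of R_S. -/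
variable {R : Type*}

/- If `a = r/s` and `b = r'/s'` with `0 ≠ ab ∈ I_S`, then `t r r' ∈ I` for some `t ∈ M`, and
`t r r' ≠ 0` since otherwise `ab = 0` already in `S`. Weak semiprimarity puts `t r` or `r'` in `√I`,
and `√(I_S) = (√I)_S` in a localization. -/
theorem IsWeaklySemiprimary.map_algebraMap [CommRing R] {M : Submonoid R} {S : Type*}
    [CommRing S] [Algebra R S] [IsLocalization M S] {I : Ideal R} (hI : IsWeaklySemiprimary I)
    (hMI : Disjoint (M : Set R) I) : IsWeaklySemiprimary (I.map (algebraMap R S)) := by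
  refine ⟨(IsLocalization.map_algebraMap_ne_top_iff_disjoint M S I).mpr hMI, fun a b hab habI ↦ ?_⟩
  obtain ⟨r, s, rfl⟩ := IsLocalization.exists_mk'_eq M a
  obtain ⟨r', s', rfl⟩ := IsLocalization.exists_mk'_eq M b
  rw [← IsLocalization.mk'_mul] at hab habI
  obtain ⟨t, ht, htI⟩ := (IsLocalization.mk'_mem_map_algebraMap_iff M S I _ _).mp habI
  have hne : t * r * r' ≠ 0 := fun h ↦
    hab ((IsLocalization.mk'_eq_zero_iff _ _).mpr ⟨⟨t, ht⟩, by rwa [← mul_assoc]⟩)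
  simp only [← IsLocalization.map_radical M S, IsLocalization.mk'_mem_map_algebraMap_iff M]
  rcases hI.2 _ _ hne (by rwa [mul_assoc]) with h | h
  · exact Or.inl ⟨t, ht, h⟩
  · exact Or.inr ⟨1, M.one_mem, by rwa [one_mul]⟩

theorem stmt_15_general [CommRing R] (M : Submonoid R)
    (I : Ideal R) (hI : IsWeaklySemiprimary I)
    (hMI : ∀ s ∈ M, s ∉ I.radical) :
    IsWeaklySemiprimary (I.map (algebraMap R (Localization M))) :=
  hI.map_algebraMap <| Set.disjoint_left.mpr fun s hs hsI ↦ hMI s hs (Ideal.le_radical hsI)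

theorem stmt_15 [CommRing R] [Nontrivial R] (M : Submonoid R)
    (hM : ∀ s ∈ M, s ∈ nonZeroDivisors R)
    (I : Ideal R) (hI : IsWeaklySemiprimary I)
    (hMI : ∀ s ∈ M, s ∉ I.radical) :
    IsWeaklySemiprimary (I.map (algebraMap R (Localization M))) :=
  stmt_15_general M I hI hMI
end

section
/- Let I ⊆ J be proper ideals of R. If J is a weakly semiprimary ideal of R, then J/I is a weakly semiprimary ideal of R/I. Conversely, if I is a weakly semiprimary ideal of R and J/I is a weakly semiprimary ideal of R/I, then J is a weakly semiprimary ideal of R. -/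
variable {R : Type*}

theorem stmt_16 [CommRing R] [Nontrivial R] (I J : Ideal R) (hIJ : I ≤ J) (hJ : J ≠ ⊤) :
    (IsWeaklySemiprimary J → IsWeaklySemiprimary (J.map (Ideal.Quotient.mk I))) ∧
    ((IsWeaklySemiprimary I ∧ IsWeaklySemiprimary (J.map (Ideal.Quotient.mk I))) →
      IsWeaklySemiprimary J) := by
  have hsurj : Function.Surjective (Ideal.Quotient.mk I) := Ideal.Quotient.mk_surjective
  have hcomap : (J.map (Ideal.Quotient.mk I)).comap (Ideal.Quotient.mk I) = J := by
    rw [Ideal.comap_map_of_surjective _ hsurj, ← RingHom.ker_eq_comap_bot, Ideal.mk_ker,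
      sup_eq_left.mpr hIJ]
  have hmem : ∀ x : R, Ideal.Quotient.mk I x ∈ J.map (Ideal.Quotient.mk I) ↔ x ∈ J := by
    intro x
    constructor
    · intro hx
      rw [← hcomap]; exact hx
    · intro hx; exact Ideal.mem_map_of_mem _ hx
  have hrad : ∀ x : R,
      Ideal.Quotient.mk I x ∈ (J.map (Ideal.Quotient.mk I)).radical ↔ x ∈ J.radical := by
    intro x
    constructor
    · rintro ⟨n, hn⟩
      rw [← map_pow, hmem] at hn
      exact ⟨n, hn⟩
    · rintro ⟨n, hn⟩
      exact ⟨n, by rw [← map_pow, hmem]; exact hn⟩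
  have hntop : J.map (Ideal.Quotient.mk I) ≠ ⊤ := by
    intro h
    apply hJ
    rw [← hcomap, h, Ideal.comap_top]
  constructor
  · rintro ⟨-, hw⟩
    refine ⟨hntop, ?_⟩
    intro a b hab habJ
    obtain ⟨x, rfl⟩ := hsurj a
    obtain ⟨y, rfl⟩ := hsurj b
    rw [← map_mul] at hab habJ
    have hxy : x * y ≠ 0 := by intro h; rw [h] at hab; simp at hab
    rcases hw x y hxy ((hmem _).mp habJ) with h | h
    · exact Or.inl ((hrad x).mpr h)
    · exact Or.inr ((hrad y).mpr h)
  · rintro ⟨⟨-, hI⟩, ⟨-, hw⟩⟩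
    refine ⟨hJ, ?_⟩
    intro a b hab habJ
    by_cases h0 : Ideal.Quotient.mk I (a * b) = 0
    · have habI : a * b ∈ I := (Ideal.Quotient.eq_zero_iff_mem).mp h0
      rcases hI a b hab habI with h | h
      · exact Or.inl (Ideal.radical_mono hIJ h)
      · exact Or.inr (Ideal.radical_mono hIJ h)
    · rw [map_mul] at h0
      rcases hw _ _ h0 (by rw [← map_mul]; exact (hmem _).mpr habJ) with h | h
      · exact Or.inl ((hrad a).mp h)
      · exact Or.inr ((hrad b).mp h)
end

section
/- Let f : R → S be a surjective ring homomorphism. If I is a weakly semiprimary ideal of R with ker(f) ⊆ I, then f(I) is a weakly semiprimary ideal of S. If J is a weakly semiprimary ideal of S and ker(f) is a weakly semiprimary ideal of R, then f⁻¹(J) is a weakly semiprimary ideal of R. -/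
variable {R : Type*}

theorem stmt_17 {S : Type*} [CommRing R] [CommRing S] [Nontrivial R] [Nontrivial S]
    (f : R →+* S) (hf : Function.Surjective f) :
    (∀ I : Ideal R, IsWeaklySemiprimary I → RingHom.ker f ≤ I →
      IsWeaklySemiprimary (I.map f)) ∧
    (∀ J : Ideal S, IsWeaklySemiprimary J → IsWeaklySemiprimary (RingHom.ker f) →
      IsWeaklySemiprimary (J.comap f)) := by
  constructor
  · intro I hI hker
    have hcomap : (I.map f).comap f = I := by
      rw [Ideal.comap_map_of_surjective f hf I]; exact sup_eq_left.mpr hker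
    constructor
    · intro htop
      apply hI.1
      rw [← hcomap, htop, Ideal.comap_top]
    · intro a b hab habI
      obtain ⟨x, hx⟩ := hf a
      obtain ⟨y, hy⟩ := hf b
      have hxy : x * y ∈ I := by
        rw [← hcomap]
        simp only [Ideal.mem_comap, map_mul, hx, hy]
        exact habI
      have hxy0 : x * y ≠ 0 := by
        intro h
        apply hab
        rw [← hx, ← hy, ← map_mul, h, map_zero]
      rcases hI.2 x y hxy0 hxy with ⟨n, hn⟩ | ⟨n, hn⟩
      · left
        exact ⟨n, by rw [← hx, ← map_pow]; exact Ideal.mem_map_of_mem f hn⟩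
      · right
        exact ⟨n, by rw [← hy, ← map_pow]; exact Ideal.mem_map_of_mem f hn⟩
  · intro J hJ hker
    constructor
    · intro htop
      apply hJ.1
      rw [Ideal.eq_top_iff_one]
      have : (1:R) ∈ J.comap f := by rw [htop]; trivial
      simpa using this
    · intro a b hab habJ
      by_cases h0 : f (a * b) = 0
      · have : a * b ∈ RingHom.ker f := h0
        rcases hker.2 a b hab this with ⟨n, hn⟩ | ⟨n, hn⟩
        · left
          exact ⟨n, Ideal.mem_comap.mpr (by simp [RingHom.mem_ker.mp hn])⟩
        · right
          exact ⟨n, Ideal.mem_comap.mpr (by simp [RingHom.mem_ker.mp hn])⟩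
      · have hfab : f a * f b ∈ J := by rw [← map_mul]; exact habJ
        have hfab0 : f a * f b ≠ 0 := by rw [← map_mul]; exact h0
        rcases hJ.2 (f a) (f b) hfab0 hfab with ⟨n, hn⟩ | ⟨n, hn⟩
        · left
          exact ⟨n, Ideal.mem_comap.mpr (by rw [map_pow]; exact hn)⟩
        · right
          exact ⟨n, Ideal.mem_comap.mpr (by rw [map_pow]; exact hn)⟩
end

section
/- Let R = R₁ × R₂ be a product of two commutative rings with 1 ≠ 0, and let I be a proper ideal of R. Then I is a weakly semiprimary ideal of R if and only if I = {(0,0)} or I is a semiprimary ideal of R. -/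
variable {R : Type*}

theorem stmt_18 {R₁ R₂ : Type*} [CommRing R₁] [CommRing R₂] [Nontrivial R₁] [Nontrivial R₂]
    (I : Ideal (R₁ × R₂)) (hI : I ≠ ⊤) :
    IsWeaklySemiprimary I ↔ I = ⊥ ∨ IsSemiprimary I := by
  constructor
  · rintro ⟨-, hw⟩
    by_cases hbot : I = ⊥
    · exact Or.inl hbot
    right
    refine ⟨hI, fun a b hab => ?_⟩
    by_cases h0 : a * b = 0
    case neg => exact hw a b h0 hab
    by_cases ha : ∃ i ∈ I, a * i ≠ 0
    · obtain ⟨i, hiI, hai⟩ := ha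
      have h1 : a * (b + i) ≠ 0 := by rwa [mul_add, h0, zero_add]
      have h2 : a * (b + i) ∈ I := by
        rw [mul_add, h0, zero_add]; exact I.mul_mem_left a hiI
      rcases hw a (b + i) h1 h2 with h | h
      · exact Or.inl h
      · right
        have := I.radical.sub_mem h (I.le_radical hiI)
        simpa using this
    push_neg at ha
    by_cases hb : ∃ i ∈ I, b * i ≠ 0
    · obtain ⟨i, hiI, hbi⟩ := hb
      have h1 : (a + i) * b ≠ 0 := by
        rw [add_mul, h0, zero_add, mul_comm]; exact hbi
      have h2 : (a + i) * b ∈ I := by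
        rw [add_mul, h0, zero_add]; exact I.mul_mem_right b hiI
      rcases hw (a + i) b h1 h2 with h | h
      · left
        have := I.radical.sub_mem h (I.le_radical hiI)
        simpa using this
      · exact Or.inr h
    push_neg at hb
    by_cases hij : ∃ i ∈ I, ∃ j ∈ I, i * j ≠ 0
    · obtain ⟨i, hiI, j, hjI, hij0⟩ := hij
      have key : (a + i) * (b + j) = i * j := by
        have e : (a + i) * (b + j) = a * b + a * j + b * i + i * j := by ring
        rw [e, h0, ha j hjI, hb i hiI, zero_add, zero_add, zero_add]
      have h1 : (a + i) * (b + j) ≠ 0 := by rwa [key]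
      have h2 : (a + i) * (b + j) ∈ I := by
        rw [key]; exact I.mul_mem_right j hiI
      rcases hw (a + i) (b + j) h1 h2 with h | h
      · left
        have := I.radical.sub_mem h (I.le_radical hiI)
        simpa using this
      · right
        have := I.radical.sub_mem h (I.le_radical hjI)
        simpa using this
    push_neg at hij
    -- I² = 0 case: derive a contradiction using the product structure
    exfalso
    obtain ⟨c, hcI, hc0⟩ := Submodule.exists_mem_ne_zero_of_ne_bot hbot
    have hc : c.1 ≠ 0 ∨ c.2 ≠ 0 := by
      by_contra hcon
      push_neg at hcon
      exact hc0 (Prod.ext hcon.1 hcon.2)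
    rcases hc with hc1 | hc2
    · -- use u = (c.1, 1), v = (1, 0)
      have hmem : ((c.1, 0) : R₁ × R₂) ∈ I := by
        have h := I.mul_mem_right ((1 : R₁), (0 : R₂)) hcI
        have heq : c * ((1 : R₁), (0 : R₂)) = (c.1, 0) := by
          ext <;> simp
        rwa [heq] at h
      have hprod : ((c.1, (1 : R₂)) : R₁ × R₂) * ((1 : R₁), (0 : R₂)) = (c.1, 0) := by
        simp [Prod.ext_iff]
      have hne : ((c.1, (1 : R₂)) : R₁ × R₂) * ((1 : R₁), (0 : R₂)) ≠ 0 := by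
        rw [hprod]; simp [Prod.ext_iff, hc1]
      have hmem' : ((c.1, (1 : R₂)) : R₁ × R₂) * ((1 : R₁), (0 : R₂)) ∈ I := by
        rw [hprod]; exact hmem
      rcases hw _ _ hne hmem' with ⟨n, hn⟩ | ⟨n, hn⟩
      · have := hij _ hn _ hn
        have h2 := congrArg Prod.snd this
        simp [Prod.pow_def] at h2
      · have hmul : (((1 : R₁), (0 : R₂)) : R₁ × R₂) * ((1 : R₁), (0 : R₂)) ^ n ∈ I :=
          I.mul_mem_left _ hn
        have heq : (((1 : R₁), (0 : R₂)) : R₁ × R₂) * ((1 : R₁), (0 : R₂)) ^ n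
            = ((1 : R₁), (0 : R₂)) := by
          simp [Prod.pow_def, Prod.ext_iff]
        rw [heq] at hmul
        have := hij _ hmul _ hmul
        have h1' := congrArg Prod.fst this
        simp at h1'
    · -- symmetric: u = (1, c.2), v = (0, 1)
      have hmem : ((0, c.2) : R₁ × R₂) ∈ I := by
        have h := I.mul_mem_right ((0 : R₁), (1 : R₂)) hcI
        have heq : c * ((0 : R₁), (1 : R₂)) = (0, c.2) := by
          ext <;> simp
        rwa [heq] at h
      have hprod : (((1 : R₁), c.2) : R₁ × R₂) * ((0 : R₁), (1 : R₂)) = (0, c.2) := by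
        simp [Prod.ext_iff]
      have hne : (((1 : R₁), c.2) : R₁ × R₂) * ((0 : R₁), (1 : R₂)) ≠ 0 := by
        rw [hprod]; simp [Prod.ext_iff, hc2]
      have hmem' : (((1 : R₁), c.2) : R₁ × R₂) * ((0 : R₁), (1 : R₂)) ∈ I := by
        rw [hprod]; exact hmem
      rcases hw _ _ hne hmem' with ⟨n, hn⟩ | ⟨n, hn⟩
      · have := hij _ hn _ hn
        have h1' := congrArg Prod.fst this
        simp [Prod.pow_def] at h1'
      · have hmul : (((0 : R₁), (1 : R₂)) : R₁ × R₂) * ((0 : R₁), (1 : R₂)) ^ n ∈ I :=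
          I.mul_mem_left _ hn
        have heq : (((0 : R₁), (1 : R₂)) : R₁ × R₂) * ((0 : R₁), (1 : R₂)) ^ n
            = ((0 : R₁), (1 : R₂)) := by
          simp [Prod.pow_def, Prod.ext_iff]
        rw [heq] at hmul
        have := hij _ hmul _ hmul
        have h2' := congrArg Prod.snd this
        simp at h2'
  · rintro (rfl | ⟨-, hs⟩)
    · exact ⟨hI, fun a b h0 habI => absurd habI (by simpa using h0)⟩
    · exact ⟨hI, fun a b _ hab => hs a b hab⟩
end

section
/- Let δ be an expansion function of ideals of R and I a weakly δ-semiprimary ideal of R. If A, B are ideals of R with {0} ≠ AB ⊆ I, then A ⊆ δ(I) or B ⊆ δ(I). (Every weakly δ-semiprimary ideal is strongly weakly δ-semiprimary.) -/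
variable {R : Type*}

theorem stmt_19 [CommRing R] [Nontrivial R] (δ : Ideal R → Ideal R)
    (hδ : IsExpansionFunction δ) (I : Ideal R) (hI : IsWeaklyDeltaSemiprimary δ I)
    (A B : Ideal R) (hAB : A * B ≠ ⊥) (hABI : A * B ≤ I) :
    A ≤ δ I ∨ B ≤ δ I := by
  by_contra hcon
  push_neg at hcon
  obtain ⟨hA, hB⟩ := hcon
  obtain ⟨a, haA, haδ⟩ := SetLike.not_le_iff_exists.mp hA
  obtain ⟨b, hbB, hbδ⟩ := SetLike.not_le_iff_exists.mp hB
  obtain ⟨hIt, hw⟩ := hI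
  have hab : a * b = 0 := by
    by_contra h
    rcases hw a b h (hABI (Ideal.mul_mem_mul haA hbB)) with h' | h'
    · exact haδ h'
    · exact hbδ h'
  have hXb : ∀ x ∈ A, x * b = 0 := by
    intro x hx
    by_contra h
    have hxδ : x ∈ δ I :=
      (hw x b h (hABI (Ideal.mul_mem_mul hx hbB))).resolve_right hbδ
    have h2 : (a + x) * b ≠ 0 := by rw [add_mul, hab, zero_add]; exact h
    have h3 : (a + x) * b ∈ I := hABI (Ideal.mul_mem_mul (A.add_mem haA hx) hbB)
    rcases hw _ _ h2 h3 with h' | h'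
    · exact haδ (by simpa using (δ I).sub_mem h' hxδ)
    · exact hbδ h'
  have haY : ∀ y ∈ B, a * y = 0 := by
    intro y hy
    by_contra h
    have hyδ : y ∈ δ I :=
      (hw a y h (hABI (Ideal.mul_mem_mul haA hy))).resolve_left haδ
    have h2 : a * (b + y) ≠ 0 := by rw [mul_add, hab, zero_add]; exact h
    have h3 : a * (b + y) ∈ I := hABI (Ideal.mul_mem_mul haA (B.add_mem hbB hy))
    rcases hw _ _ h2 h3 with h' | h'
    · exact haδ h'
    · exact hbδ (by simpa using (δ I).sub_mem h' hyδ)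
  have hzero : ∀ x ∈ A, ∀ y ∈ B, x * y = 0 := by
    intro x hx y hy
    by_contra h
    have key : (a + x) * (b + y) = x * y := by
      rw [add_mul, mul_add, mul_add, hab, haY y hy, hXb x hx]
      ring
    have h2 : (a + x) * (b + y) ≠ 0 := by rw [key]; exact h
    have h3 : (a + x) * (b + y) ∈ I :=
      hABI (Ideal.mul_mem_mul (A.add_mem haA hx) (B.add_mem hbB hy))
    have hxy := hw x y h (hABI (Ideal.mul_mem_mul hx hy))
    rcases hw _ _ h2 h3 with h' | h'
    · -- a + x ∈ δ I, so x ∉ δ I, so y ∈ δ I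
      have hxδ : x ∉ δ I := fun hc => haδ (by simpa using (δ I).sub_mem h' hc)
      have hyδ : y ∈ δ I := hxy.resolve_left hxδ
      have h4 : x * (b + y) ≠ 0 := by rw [mul_add, hXb x hx, zero_add]; exact h
      have h5 : x * (b + y) ∈ I := hABI (Ideal.mul_mem_mul hx (B.add_mem hbB hy))
      rcases hw _ _ h4 h5 with h'' | h''
      · exact hxδ h''
      · exact hbδ (by simpa using (δ I).sub_mem h'' hyδ)
    · -- b + y ∈ δ I, so y ∉ δ I, so x ∈ δ I
      have hyδ : y ∉ δ I := fun hc => hbδ (by simpa using (δ I).sub_mem h' hc)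
      have hxδ : x ∈ δ I := hxy.resolve_right hyδ
      have h4 : (a + x) * y ≠ 0 := by rw [add_mul, haY y hy, zero_add]; exact h
      have h5 : (a + x) * y ∈ I := hABI (Ideal.mul_mem_mul (A.add_mem haA hx) hy)
      rcases hw _ _ h4 h5 with h'' | h''
      · exact haδ (by simpa using (δ I).sub_mem h'' hxδ)
      · exact hyδ h''
  exact hAB (le_bot_iff.mp (Ideal.mul_le.mpr fun x hx y hy => by
    simp [hzero x hx y hy]))
end
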